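/- arXiv:2108.06348 — 2 statements merged into one kernel-verified Lean document; each statement's English description precedes it below -/
import Mathlib

section
/- The iteration scheme ITER_ω holds in V: given a class function F : ZFSet → ZFSet and a set c, there exists a set H which is a function with domain ω such that H(∅) = c and for all x ∈ ω, H applied to the successor of x equals F applied to H(x). -/
open ZFSet

/-- von Neumann naturals as ZF sets. -/
def natToZF : ℕ → ZFSet
  | 0 => ∅
  | n + 1 => insert (natToZF n) (natToZF n)

lemma natToZF_mem_omega (n : ℕ) : natToZF n ∈ ZFSet.omega := by
  induction n with
  | zero => exact omega_zero
  | succ n ih => exact omega_succ ih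

lemma mk_ofNat (n : ℕ) : ZFSet.mk (PSet.ofNat n) = natToZF n := by
  induction n with
  | zero => rfl
  | succ n ih =>
    show ZFSet.mk (insert (PSet.ofNat n) (PSet.ofNat n)) = _
    rw [show ZFSet.mk (insert (PSet.ofNat n) (PSet.ofNat n))
        = insert (ZFSet.mk (PSet.ofNat n)) (ZFSet.mk (PSet.ofNat n)) from rfl, ih]
    rfl

lemma mem_omega_iff {x : ZFSet} : x ∈ ZFSet.omega ↔ ∃ n, x = natToZF n := by
  constructor
  · refine Quotient.inductionOn x fun p hp => ?_
    obtain ⟨⟨n⟩, e⟩ := hp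
    exact ⟨n, (ZFSet.sound e).trans (mk_ofNat n)⟩
  · rintro ⟨n, rfl⟩; exact natToZF_mem_omega n

lemma natToZF_lt_mem {m n : ℕ} (h : m < n) : natToZF m ∈ natToZF n := by
  induction n with
  | zero => omega
  | succ n ih =>
    rcases Nat.lt_succ_iff_lt_or_eq.mp h with h' | rfl
    · exact ZFSet.mem_insert_iff.2 (Or.inr (ih h'))
    · exact ZFSet.mem_insert _ _

lemma natToZF_injective : Function.Injective natToZF := by
  intro m n h
  by_contra hne
  rcases Nat.lt_or_ge m n with hl | hg
  · exact ZFSet.mem_irrefl _ (h ▸ natToZF_lt_mem hl)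
  · exact ZFSet.mem_irrefl _ (h ▸ natToZF_lt_mem (lt_of_le_of_ne hg (Ne.symm hne)))

/-- `H` is a set-theoretic function with domain `d`: all elements of `H` are pairs with
first coordinate in `d`, and each element of `d` occurs exactly once as a first coordinate. -/
def IsFuncOn (H d : ZFSet) : Prop :=
  (∀ q ∈ H, ∃ x ∈ d, ∃ z : ZFSet, q = ZFSet.pair x z) ∧
  ∀ x ∈ d, ∃! z : ZFSet, ZFSet.pair x z ∈ H

open Classical in
noncomputable def iterVal (F : ZFSet → ZFSet) (c : ZFSet) (x : ZFSet) : ZFSet :=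
  if h : ∃ n, x = natToZF n then F^[h.choose] c else ∅

lemma iterVal_natToZF (F : ZFSet → ZFSet) (c : ZFSet) (n : ℕ) :
    iterVal F c (natToZF n) = F^[n] c := by
  have h : ∃ m, natToZF n = natToZF m := ⟨n, rfl⟩
  rw [iterVal, dif_pos h]
  rw [natToZF_injective h.choose_spec.symm]

theorem iter_omega (F : ZFSet → ZFSet) (c : ZFSet) :
    ∃ H : ZFSet, IsFuncOn H ZFSet.omega ∧
      ZFSet.pair ∅ c ∈ H ∧
      ∀ x ∈ ZFSet.omega, ∀ z : ZFSet,
        ZFSet.pair x z ∈ H → ZFSet.pair (x ∪ {x}) (F z) ∈ H := by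
  classical
  let g : ZFSet → ZFSet := fun x => ZFSet.pair x (iterVal F c x)
  haveI : ZFSet.Definable₁ g := Classical.allZFSetDefinable _
  refine ⟨ZFSet.image g ZFSet.omega, ⟨?_, ?_⟩, ?_, ?_⟩
  · intro q hq
    obtain ⟨x, hx, rfl⟩ := ZFSet.mem_image.1 hq
    exact ⟨x, hx, iterVal F c x, rfl⟩
  · intro x hx
    refine ⟨iterVal F c x, ZFSet.image.mk g _ hx, ?_⟩
    intro z hz
    obtain ⟨y, _, hy⟩ := ZFSet.mem_image.1 hz
    obtain ⟨rfl, rfl⟩ := ZFSet.pair_inj.1 hy.symm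
    rfl
  · have h0 : g ∅ = ZFSet.pair ∅ c := by
      rw [show g ∅ = ZFSet.pair (natToZF 0) (iterVal F c (natToZF 0)) from rfl,
        iterVal_natToZF, Function.iterate_zero_apply]
      rfl
    exact h0 ▸ ZFSet.image.mk g _ omega_zero
  · intro x hx z hz
    obtain ⟨n, rfl⟩ := mem_omega_iff.1 hx
    obtain ⟨y, _, hy⟩ := ZFSet.mem_image.1 hz
    obtain ⟨rfl, rfl⟩ := ZFSet.pair_inj.1 hy.symm
    have hu : natToZF n ∪ {natToZF n} = natToZF (n + 1) := by
      apply ZFSet.ext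
      intro w
      simp only [ZFSet.mem_union, ZFSet.mem_singleton, natToZF, ZFSet.mem_insert_iff]
      tauto
    have h1 : g (natToZF (n + 1)) = ZFSet.pair (natToZF (n + 1)) (F (iterVal F c (natToZF n))) := by
      simp only [g, iterVal_natToZF, Function.iterate_succ_apply']
    rw [hu, ← h1]
    exact ZFSet.image.mk g _ (natToZF_mem_omega (n + 1))
end

section
/- The functional Regular Extension Axiom holds in V: for every set x there exists a set C such that x ⊆ C, C is transitive, and for every b ∈ C and every set-theoretic function f from b into C (a functional set of pairs with domain b and values in C), the image of f is an element of C. -/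
universe u

/-!
Take `C = H(κ)`, the sets hereditarily of cardinality less than `κ`, for a regular `κ` exceeding
`|V_{rank x}|`. It is transitive and contains `x`, and the image of a function on `b ∈ H(κ)` with
values in `H(κ)` has at most `|b| < κ` elements, so it lies in `H(κ)` again.
-/

open Cardinal Ordinal

namespace ZFSet

theorem rank_lt_ord_of_hereditarily {κ : Cardinal.{u}} (hκ : κ.IsRegular) {x : ZFSet.{u}}
    (hx : x.Hereditarily (card · < κ)) : rank x < κ.ord := by
  induction x using inductionOn with | _ x ih
  let e := equivShrink.{u} x
  have hsup : ⨆ i, rank (e.symm i).1 + 1 < κ.ord :=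
    iSup_add_one_lt_of_lt_cof (by rw [hκ.cof_ord]; exact hx.self)
      fun i => ih _ (e.symm i).2 (hx.mem (e.symm i).2)
  refine lt_of_le_of_lt (rank_le_iff.2 fun y hy => ?_) hsup
  have hy_le := Ordinal.le_iSup (fun i => rank (e.symm i).1 + 1) (e ⟨y, hy⟩)
  simp only [Equiv.symm_apply_apply] at hy_le
  exact (lt_add_one _).trans_le hy_le

theorem hereditarily_card_lt_of_rank_le {κ : Cardinal.{u}} {o : Ordinal.{u}}
    (hκ : card (V_ o) < κ) {x : ZFSet.{u}} (hx : rank x ≤ o) :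
    x.Hereditarily (card · < κ) := by
  induction x using inductionOn with | _ x ih
  rw [hereditarily_iff]
  refine ⟨(card_mono ?_).trans_lt hκ, fun y hy => ih y hy ((rank_lt_of_mem hy).le.trans hx)⟩
  exact (subset_vonNeumann_self x).trans (vonNeumann_subset_of_le hx)

theorem card_le_of_isFunc {b c f s : ZFSet.{u}} (hf : IsFunc b c f)
    (hs : ∀ z ∈ s, ∃ y ∈ b, pair y z ∈ f) : card s ≤ card b := by
  choose g hgb hgf using hs
  have hg : Function.Injective fun z : s => (⟨g z z.2, hgb z z.2⟩ : b) := by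
    rintro ⟨z, hz⟩ ⟨z', hz'⟩ h
    simp only [Subtype.mk.injEq] at h ⊢
    obtain ⟨w, -, hw⟩ := hf.2 _ (hgb z hz)
    exact (hw z (hgf z hz)).trans (hw z' (h ▸ hgf z' hz')).symm
  simpa [cardinalMk_coe_sort] using mk_le_of_injective hg

/-- `H(κ)`, cut out of `V_ κ.ord`, which contains all of it when `κ` is regular
(`rank_lt_ord_of_hereditarily`). -/
noncomputable def hereditarilyCardLT (κ : Cardinal.{u}) : ZFSet.{u} :=
  (V_ κ.ord).sep (Hereditarily (card · < κ))

theorem mem_hereditarilyCardLT {κ : Cardinal.{u}} (hκ : κ.IsRegular) {x : ZFSet.{u}} :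
    x ∈ hereditarilyCardLT κ ↔ x.Hereditarily (card · < κ) := by
  rw [hereditarilyCardLT, mem_sep, mem_vonNeumann]
  exact and_iff_right_of_imp (rank_lt_ord_of_hereditarily hκ)

theorem isTransitive_hereditarilyCardLT (κ : Cardinal.{u}) :
    (hereditarilyCardLT κ).IsTransitive := by
  intro y hy z hz
  rw [hereditarilyCardLT, mem_sep] at hy ⊢
  exact ⟨(isTransitive_vonNeumann _).mem_trans hz hy.1, hy.2.mem hz⟩

theorem mem_hereditarilyCardLT_of_subset {κ : Cardinal.{u}} (hκ : κ.IsRegular) {x : ZFSet.{u}}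
    (hx : x ⊆ hereditarilyCardLT κ) (hcard : card x < κ) : x ∈ hereditarilyCardLT κ := by
  rw [mem_hereditarilyCardLT hκ, hereditarily_iff]
  exact ⟨hcard, fun y hy => (mem_hereditarilyCardLT hκ).1 (hx hy)⟩

end ZFSet

open ZFSet in
theorem fREA (x : ZFSet) :
    ∃ C : ZFSet, x ⊆ C ∧ (∀ y ∈ C, y ⊆ C) ∧
      ∀ b ∈ C, ∀ f : ZFSet, ZFSet.IsFunc b C f →
        ∃ im ∈ C, ∀ z : ZFSet, z ∈ im ↔ ∃ y ∈ b, ZFSet.pair y z ∈ f := by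
  set κ := Order.succ (max ℵ₀ (card (V_ (rank x))))
  have hκ : κ.IsRegular := isRegular_succ (le_max_left _ _)
  have hxκ : x.Hereditarily (card · < κ) :=
    hereditarily_card_lt_of_rank_le ((le_max_right _ _).trans_lt (Order.lt_succ _)) le_rfl
  refine ⟨hereditarilyCardLT κ, fun y hy => (mem_hereditarilyCardLT hκ).2 (hxκ.mem hy),
    isTransitive_hereditarilyCardLT κ, fun b hb f hf => ?_⟩
  set im := (hereditarilyCardLT κ).sep fun z => ∃ y ∈ b, pair y z ∈ f
  have him : ∀ z, z ∈ im ↔ ∃ y ∈ b, pair y z ∈ f := fun z =>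
    mem_sep.trans (and_iff_right_of_imp fun ⟨_, _, h⟩ => (pair_mem_prod.1 (hf.1 h)).2)
  refine ⟨im, mem_hereditarilyCardLT_of_subset hκ (fun z hz => (mem_sep.1 hz).1) ?_, him⟩
  exact (card_le_of_isFunc hf fun z hz => (him z).1 hz).trans_lt
    ((mem_hereditarilyCardLT hκ).1 hb).self
end
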